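/- arXiv:math/0609245 — 2 statements merged into one kernel-verified Lean document; each statement's English description precedes it below -/
import Mathlib

section
/- Let f be the inverse of h(u) = (1/2)u√(1+u²) + (1/2)ln(u + √(1+u²)). Then for every v ∈ ℝ one has |f(v)| ≤ |v| and f(v)² ≤ 2|v|. -/
/-- The change of variables `h(u) = (1/2)·u·√(1+u²) + (1/2)·ln(u + √(1+u²))`. -/
noncomputable def h (u : ℝ) : ℝ :=
  (1 / 2) * u * Real.sqrt (1 + u ^ 2) + (1 / 2) * Real.log (u + Real.sqrt (1 + u ^ 2))

lemma h_eq (u : ℝ) : h u = (1 / 2) * u * Real.sqrt (1 + u ^ 2) + (1 / 2) * Real.arsinh u := rfl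

lemma sqrt_pos' (u : ℝ) : 0 < Real.sqrt (1 + u ^ 2) :=
  Real.sqrt_pos.2 (by positivity)

lemma h_hasDerivAt (u : ℝ) : HasDerivAt h (Real.sqrt (1 + u ^ 2)) u := by
  have hs := sqrt_pos' u
  have h1 : HasDerivAt (fun x : ℝ => 1 + x ^ 2) (2 * u) u := by
    simpa using ((hasDerivAt_pow 2 u).const_add 1)
  have h2 : HasDerivAt (fun x : ℝ => Real.sqrt (1 + x ^ 2))
      (1 / (2 * Real.sqrt (1 + u ^ 2)) * (2 * u)) u :=
    (Real.hasDerivAt_sqrt (by positivity)).comp u h1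
  have h3 : HasDerivAt (fun x : ℝ => (1 / 2) * x * Real.sqrt (1 + x ^ 2))
      ((1 / 2) * Real.sqrt (1 + u ^ 2) + (1 / 2) * u * (1 / (2 * Real.sqrt (1 + u ^ 2)) * (2 * u))) u := by
    have := (show HasDerivAt (fun x : ℝ => (1 / 2 : ℝ) * id x * Real.sqrt (1 + x ^ 2)) _ u from
      ((hasDerivAt_id u).const_mul (1 / 2 : ℝ)).mul h2)
    simp only [id_eq] at this
    convert this using 1
    ring
  have h4 : HasDerivAt (fun x : ℝ => (1 / 2) * Real.arsinh x)
      ((1 / 2) * (Real.sqrt (1 + u ^ 2))⁻¹) u := (Real.hasDerivAt_arsinh u).const_mul (1 / 2)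
  have h5 := h3.add h4
  have key : (1 / 2) * Real.sqrt (1 + u ^ 2) + (1 / 2) * u * (1 / (2 * Real.sqrt (1 + u ^ 2)) * (2 * u))
      + (1 / 2) * (Real.sqrt (1 + u ^ 2))⁻¹ = Real.sqrt (1 + u ^ 2) := by
    have hsq : Real.sqrt (1 + u ^ 2) ^ 2 = 1 + u ^ 2 := Real.sq_sqrt (by positivity)
    field_simp
    nlinarith [hsq]
  rw [key] at h5
  have : h = fun x : ℝ => (1 / 2) * x * Real.sqrt (1 + x ^ 2) + (1 / 2) * Real.arsinh x := by
    funext x; exact h_eq x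
  rw [this]
  exact h5

lemma h_zero : h 0 = 0 := by simp [h]

lemma h_ge_id {u : ℝ} (hu : 0 ≤ u) : u ≤ h u := by
  have mono : MonotoneOn (fun x => h x - x) (Set.Ici (0 : ℝ)) := by
    apply monotoneOn_of_deriv_nonneg (convex_Ici 0)
    · exact fun x _ => ((h_hasDerivAt x).sub (hasDerivAt_id' x)).continuousAt.continuousWithinAt
    · intro x _
      exact ((h_hasDerivAt x).sub (hasDerivAt_id' x)).differentiableAt.differentiableWithinAt
    · intro x _
      rw [(show HasDerivAt (fun x => h x - x) (Real.sqrt (1 + x ^ 2) - 1) x from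
        (h_hasDerivAt x).sub (hasDerivAt_id' x)).deriv]
      nlinarith [Real.sq_sqrt (show (0:ℝ) ≤ 1 + x ^ 2 by positivity),
        Real.sqrt_nonneg (1 + x ^ 2)]
  have := mono (Set.self_mem_Ici) (Set.mem_Ici.2 hu) hu
  simp [h_zero] at this
  linarith

lemma h_ge_sq {u : ℝ} (hu : 0 ≤ u) : u ^ 2 / 2 ≤ h u := by
  rw [h_eq]
  have h1 : u ≤ Real.sqrt (1 + u ^ 2) := by
    nlinarith [Real.sq_sqrt (show (0:ℝ) ≤ 1 + u ^ 2 by positivity),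
      Real.sqrt_nonneg (1 + u ^ 2)]
  have h2 : 0 ≤ Real.arsinh u := Real.arsinh_nonneg_iff.2 hu
  nlinarith

lemma h_neg (u : ℝ) : h (-u) = - h u := by
  rw [h_eq, h_eq, Real.arsinh_neg]
  have : (-u) ^ 2 = u ^ 2 := by ring
  rw [this]; ring

/-- If `f` is the inverse of `h`, then `|f(v)| ≤ |v|` and `f(v)² ≤ 2|v|` for every `v`. -/
theorem f_inverse_bounds (f : ℝ → ℝ)
    (hf₁ : Function.LeftInverse f h) (hf₂ : Function.RightInverse f h) :
    ∀ v : ℝ, |f v| ≤ |v| ∧ f v ^ 2 ≤ 2 * |v| := by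
  intro v
  set u := f v with hu
  have hv : h u = v := hf₂ v
  rcases le_or_gt 0 u with h0 | h0
  · have h1 : u ≤ v := hv ▸ h_ge_id h0
    have h2 : u ^ 2 / 2 ≤ v := hv ▸ h_ge_sq h0
    have hv0 : 0 ≤ v := le_trans h0 h1
    constructor
    · rw [abs_of_nonneg h0, abs_of_nonneg hv0]; exact h1
    · rw [abs_of_nonneg hv0]; linarith
  · have h0' : 0 ≤ -u := by linarith
    have h1 : -u ≤ -v := by have := h_ge_id h0'; rwa [h_neg, hv] at this
    have h2 : (-u) ^ 2 / 2 ≤ -v := by have := h_ge_sq h0'; rwa [h_neg, hv] at this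
    have hv0 : v ≤ 0 := by linarith
    constructor
    · rw [abs_of_nonpos h0.le, abs_of_nonpos hv0]; exact h1
    · rw [abs_of_nonpos hv0]; nlinarith
end

section
/- Let f be the inverse of h(u) = (1/2)u√(1+u²) + (1/2)ln(u + √(1+u²)). Then for every v ≥ 0 one has f(v) ≥ √(1+2v) − 1. -/
open Real

lemma h_eq_sinh_two_mul_arsinh (u : ℝ) : h u = sinh (2 * arsinh u) / 4 + arsinh u / 2 := by
  rw [h, sinh_two_mul, sinh_arsinh, cosh_arsinh, arsinh]
  ring

lemma h_strictMono : StrictMono h := by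
  intro a b hab
  have harsinh : arsinh a < arsinh b := arsinh_strictMono hab
  have hsinh : sinh (2 * arsinh a) < sinh (2 * arsinh b) := sinh_strictMono (by linarith)
  rw [h_eq_sinh_two_mul_arsinh, h_eq_sinh_two_mul_arsinh]
  linarith

lemma arsinh_le_self {u : ℝ} (hu : 0 ≤ u) : arsinh u ≤ u := by
  rw [← sinh_le_sinh, sinh_arsinh]
  exact self_le_sinh_iff.mpr hu

lemma sqrt_one_add_sq_le_add_one {u : ℝ} (hu : 0 ≤ u) : √(1 + u ^ 2) ≤ u + 1 :=
  sqrt_le_iff.mpr ⟨by linarith, by nlinarith⟩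

lemma h_le_sq_div_two_add_self {u : ℝ} (hu : 0 ≤ u) : h u ≤ u ^ 2 / 2 + u := by
  have hsqrt := sqrt_one_add_sq_le_add_one hu
  have hlog : log (u + √(1 + u ^ 2)) ≤ u := arsinh_le_self hu
  rw [h]
  nlinarith

lemma sq_div_two_add_self_sqrt_one_add_two_mul_sub_one {v : ℝ} (hv : -(1 / 2) ≤ v) :
    (√(1 + 2 * v) - 1) ^ 2 / 2 + (√(1 + 2 * v) - 1) = v := by
  have hsq : √(1 + 2 * v) ^ 2 = 1 + 2 * v := sq_sqrt (by linarith)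
  linear_combination hsq / 2

theorem f_inverse_lower_bound_general (f : ℝ → ℝ)
    (hf₂ : Function.RightInverse f h) :
    ∀ v : ℝ, 0 ≤ v → Real.sqrt (1 + 2 * v) - 1 ≤ f v := by
  intro v hv
  have hu : 0 ≤ √(1 + 2 * v) - 1 := sub_nonneg.mpr (one_le_sqrt.mpr (by linarith))
  refine h_strictMono.le_iff_le.mp ?_
  calc h (√(1 + 2 * v) - 1)
      ≤ (√(1 + 2 * v) - 1) ^ 2 / 2 + (√(1 + 2 * v) - 1) := h_le_sq_div_two_add_self hu
    _ = v := sq_div_two_add_self_sqrt_one_add_two_mul_sub_one (by linarith)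
    _ = h (f v) := (hf₂ v).symm

/-- If `f` is the inverse of `h`, then `f(v) ≥ √(1+2v) − 1` for every `v ≥ 0`. -/
theorem f_inverse_lower_bound (f : ℝ → ℝ)
    (hf₁ : Function.LeftInverse f h) (hf₂ : Function.RightInverse f h) :
    ∀ v : ℝ, 0 ≤ v → Real.sqrt (1 + 2 * v) - 1 ≤ f v :=
  f_inverse_lower_bound_general f hf₂
end
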